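/- Let B ⊂ ℝ^{d-1} be an open ball and f : B → ℝ a Λ-Lipschitz function. There exists a constant C > 0, depending only on B, Λ and d, such that for every h > 0 and every function v that is continuously differentiable on an open neighborhood of the closure of the set C_h = {(x̂, x_d) : x̂ ∈ B, |x_d − f(x̂)| < h} ⊂ ℝ^d, one has C·∫_{C_h} v² dx ≤ h²·∫_{C_h} |∇v|² dx + h·∫_{Γ_h} v² d𝓗^{d-1}, where Γ_h = {(x̂, f(x̂)+h) : x̂ ∈ B} is the upper (shifted-graph) boundary piece, 𝓗^{d-1} denotes the (d−1)-dimensional Hausdorff measure, and |∇v| is the Euclidean norm of the gradient. -/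

import Mathlib

open Metric Set MeasureTheory

noncomputable section

/-- `ℝ^n` with the Euclidean norm. -/
abbrev Euc (n : ℕ) := EuclideanSpace ℝ (Fin n)

/-- The space `ℝ^{d-1} × ℝ` equipped with the Euclidean (l²) product structure, so that
`‖gradient v p‖` is the Euclidean norm of the gradient of `v` at `p`, and Hausdorff
measures are taken with respect to the Euclidean metric. -/
abbrev Pt (d : ℕ) := WithLp 2 (Euc (d - 1) × ℝ)

instance (d : ℕ) : MeasurableSpace (Pt d) := borel _
instance (d : ℕ) : BorelSpace (Pt d) := ⟨rfl⟩

/-- The point `(x, y) ∈ ℝ^{d-1} × ℝ`. -/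
def toPt (d : ℕ) (x : Euc (d - 1)) (y : ℝ) : Pt d :=
  (WithLp.equiv 2 (Euc (d - 1) × ℝ)).symm (x, y)

/-- First (horizontal) component of a point of `ℝ^{d-1} × ℝ`. -/
def fstPt (d : ℕ) (p : Pt d) : Euc (d - 1) := (WithLp.equiv 2 (Euc (d - 1) × ℝ) p).1

/-- Second (vertical) component of a point of `ℝ^{d-1} × ℝ`. -/
def sndPt (d : ℕ) (p : Pt d) : ℝ := (WithLp.equiv 2 (Euc (d - 1) × ℝ) p).2

/-- Lebesgue measure on `ℝ^d = ℝ^{d-1} × ℝ`, transported through the canonical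
identification. -/
def lebPt (d : ℕ) : Measure (Pt d) :=
  Measure.map (WithLp.equiv 2 (Euc (d - 1) × ℝ)).symm volume

/-- The curved cylinder `C_h = {(x̂, x_d) : x̂ ∈ B, |x_d - f x̂| < h}` of half-height `h`
around the graph of `f` over the ball `B = B(x₀, ρ)`. -/
def curvedCyl (d : ℕ) (f : Euc (d - 1) → ℝ) (x₀ : Euc (d - 1)) (ρ h : ℝ) : Set (Pt d) :=
  { p | fstPt d p ∈ Metric.ball x₀ ρ ∧ |sndPt d p - f (fstPt d p)| < h }

/-- The upper boundary graph `Γ_h = {(x̂, f x̂ + h) : x̂ ∈ B}`. -/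
def upperGraph (d : ℕ) (f : Euc (d - 1) → ℝ) (x₀ : Euc (d - 1)) (ρ h : ℝ) : Set (Pt d) :=
  (fun x => toPt d x (f x + h)) '' Metric.ball x₀ ρ

/-!
Extend `f` to a `Λ`-Lipschitz function `F` on all of `ℝ^{d-1}` and work fibrewise. On a vertical
segment `[a, b]`, writing `g(t)² = g(b)² - ∫_t^b 2 g g'` and using Young's inequality
`-2 g g' ≤ c⁻¹ g² + c g'²` with `c = 2 (b - a)` gives
`∫_a^b g² ≤ 2 (b - a) g(b)² + 4 (b - a)² ∫_a^b g'²`. On the fibre over `x̂ ∈ B` we have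
`b - a = 2h` and `|g'| ≤ |∇v|`, so Fubini yields
`∫_{C_h} v² ≤ 4h ∫_B v(x̂, F x̂ + h)² dx̂ + 16h² ∫_{C_h} |∇v|²`.
The map `x̂ ↦ (x̂, F x̂ + h)` does not decrease distances and Lebesgue measure on `ℝ^{d-1}` is
dominated by `𝓗^{d-1}`, so the boundary term is at most `∫_{Γ_h} v² d𝓗^{d-1}`; hence `C = 1/16`.
-/

open scoped NNReal

theorem sq_le_sq_add_intervalIntegral {g g' : ℝ → ℝ} {a b c : ℝ} (hc : 0 < c)
    (hg : ∀ t ∈ Icc a b, HasDerivAt g (g' t) t) (hg' : ContinuousOn g' (Icc a b))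
    {t : ℝ} (ht : t ∈ Icc a b) :
    g t ^ 2 ≤ g b ^ 2 + ∫ s in a..b, (c⁻¹ * g s ^ 2 + c * g' s ^ 2) := by
  have hgc : ContinuousOn g (Icc a b) := fun s hs => (hg s hs).continuousAt.continuousWithinAt
  have hsub : uIcc t b ⊆ Icc a b := by
    rw [uIcc_of_le ht.2]; exact Icc_subset_Icc ht.1 le_rfl
  have hyoung : ∀ s, -(2 * g s * g' s) ≤ c⁻¹ * g s ^ 2 + c * g' s ^ 2 := fun s => by
    have : 0 ≤ c⁻¹ * (g s + c * g' s) ^ 2 := by positivity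
    have hc' : c⁻¹ * c = 1 := inv_mul_cancel₀ hc.ne'
    nlinarith
  have hQ : ContinuousOn (fun s => c⁻¹ * g s ^ 2 + c * g' s ^ 2) (Icc a b) := by fun_prop
  have hftc : ∫ s in t..b, 2 * g s * g' s = g b ^ 2 - g t ^ 2 :=
    intervalIntegral.integral_eq_sub_of_hasDerivAt (f := fun s => g s ^ 2)
      (fun s hs => ((hg s (hsub hs)).fun_pow 2).congr_deriv (by norm_num))
      ((ContinuousOn.mono (by fun_prop) hsub).intervalIntegrable)
  calc g t ^ 2 = g b ^ 2 + ∫ s in t..b, -(2 * g s * g' s) := by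
        rw [intervalIntegral.integral_neg, hftc]; ring
    _ ≤ g b ^ 2 + ∫ s in t..b, (c⁻¹ * g s ^ 2 + c * g' s ^ 2) := by
        gcongr
        exact intervalIntegral.integral_mono_on ht.2
          ((ContinuousOn.mono (by fun_prop) hsub).intervalIntegrable)
          ((hQ.mono hsub).intervalIntegrable) fun s _ => hyoung s
    _ ≤ g b ^ 2 + ∫ s in a..b, (c⁻¹ * g s ^ 2 + c * g' s ^ 2) := by
        gcongr
        exact intervalIntegral.integral_mono_interval ht.1 ht.2 le_rfl
          (Filter.Eventually.of_forall fun s => by positivity)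
          (hQ.mono (uIcc_of_le (ht.1.trans ht.2)).subset).intervalIntegrable

theorem intervalIntegral_sq_le {g g' : ℝ → ℝ} {a b : ℝ} (hab : a < b)
    (hg : ∀ t ∈ Icc a b, HasDerivAt g (g' t) t) (hg' : ContinuousOn g' (Icc a b)) :
    ∫ t in a..b, g t ^ 2 ≤ 2 * (b - a) * g b ^ 2 + 4 * (b - a) ^ 2 * ∫ t in a..b, g' t ^ 2 := by
  have hgc : ContinuousOn g (Icc a b) := fun s hs => (hg s hs).continuousAt.continuousWithinAt
  have hIcc : uIcc a b = Icc a b := uIcc_of_le hab.le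
  have hg2 : IntervalIntegrable (fun t => g t ^ 2) volume a b :=
    (hIcc ▸ hgc.pow 2).intervalIntegrable
  have hg'2 : IntervalIntegrable (fun t => g' t ^ 2) volume a b :=
    (hIcc ▸ hg'.pow 2).intervalIntegrable
  have hc : 0 < 2 * (b - a) := by linarith
  -- with `c = 2 (b - a)` the term `(b - a) c⁻¹ ∫ g²` is half of the left side
  have key := intervalIntegral.integral_mono_on hab.le hg2 intervalIntegrable_const
    fun t ht => sq_le_sq_add_intervalIntegral hc hg hg' ht
  rw [intervalIntegral.integral_const, smul_eq_mul, intervalIntegral.integral_add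
    (hg2.const_mul _) (hg'2.const_mul _), intervalIntegral.integral_const_mul,
    intervalIntegral.integral_const_mul] at key
  have hhalf : (b - a) * (2 * (b - a))⁻¹ = 1 / 2 := by
    field_simp [(sub_pos.2 hab).ne']
  linear_combination (2 : ℝ) * key + (2 * ∫ t in a..b, g t ^ 2) * hhalf

theorem norm_gradient_eq_norm_fderiv {E : Type*} [NormedAddCommGroup E] [InnerProductSpace ℝ E]
    [CompleteSpace E] (v : E → ℝ) (p : E) : ‖gradient v p‖ = ‖fderiv ℝ v p‖ :=
  (InnerProductSpace.toDual ℝ E).symm.norm_map _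

theorem ContinuousOn.integrableOn_of_isCompact_of_subset {X E : Type*} [TopologicalSpace X]
    [MeasurableSpace X] [OpensMeasurableSpace X] [NormedAddCommGroup E] [SecondCountableTopology E]
    {μ : Measure X} {K s : Set X} {φ : X → E} (hφ : ContinuousOn φ K) (hK : IsCompact K)
    (hsK : s ⊆ K) (hs : MeasurableSet s) (hμs : μ s ≠ ⊤) : IntegrableOn φ s μ := by
  obtain ⟨M, hM⟩ := hK.exists_bound_of_continuousOn hφ
  exact IntegrableOn.of_bound hμs.lt_top ((hφ.mono hsK).aestronglyMeasurable hs) M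
    (ae_restrict_of_forall_mem hs fun x hx => hM x (hsK hx))

theorem setIntegral_sq_along_line_le {E : Type*} [NormedAddCommGroup E] [InnerProductSpace ℝ E]
    [CompleteSpace E] {v : E → ℝ} {U : Set E} (hU : IsOpen U) (hv : ContDiffOn ℝ 1 v U)
    {p e : E} (he : ‖e‖ ≤ 1) {a b : ℝ} (hab : a < b) (hpU : ∀ t ∈ Icc a b, p + t • e ∈ U) :
    ∫ t in Ioo a b, v (p + t • e) ^ 2 ≤ 2 * (b - a) * v (p + b • e) ^ 2 +
      4 * (b - a) ^ 2 * ∫ t in Ioo a b, ‖gradient v (p + t • e)‖ ^ 2 := by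
  have hline : Continuous fun t : ℝ => p + t • e := by fun_prop
  have hDv := hv.continuousOn_fderiv_of_isOpen hU le_rfl
  have hderiv : ∀ t ∈ Icc a b, HasDerivAt (fun t => v (p + t • e)) (fderiv ℝ v (p + t • e) e) t :=
    fun t ht => by
      have hγ : HasDerivAt (fun t : ℝ => p + t • e) e t := by
        simpa using ((hasDerivAt_id t).smul_const e).const_add p
      exact ((hv.differentiableOn one_ne_zero).differentiableAt
        (hU.mem_nhds (hpU t ht))).hasFDerivAt.comp_hasDerivAt t hγ
  have hIcc : uIcc a b = Icc a b := uIcc_of_le hab.le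
  have hdir : ContinuousOn (fun t => fderiv ℝ v (p + t • e) e) (Icc a b) :=
    (hDv.comp hline.continuousOn hpU).clm_apply continuousOn_const
  have hgrad : ContinuousOn (fun t => ‖gradient v (p + t • e)‖ ^ 2) (Icc a b) := by
    simp only [norm_gradient_eq_norm_fderiv]
    exact ((hDv.comp hline.continuousOn hpU).norm).pow 2
  have hle : ∀ t ∈ Icc a b, (fderiv ℝ v (p + t • e) e) ^ 2 ≤ ‖gradient v (p + t • e)‖ ^ 2 :=
    fun t _ => by
      rw [norm_gradient_eq_norm_fderiv, ← sq_abs, ← Real.norm_eq_abs]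
      gcongr
      exact (ContinuousLinearMap.le_opNorm _ e).trans (mul_le_of_le_one_right (norm_nonneg _) he)
  simp only [← integral_Ioc_eq_integral_Ioo, ← intervalIntegral.integral_of_le hab.le]
  calc ∫ t in a..b, v (p + t • e) ^ 2
      ≤ 2 * (b - a) * v (p + b • e) ^ 2 +
          4 * (b - a) ^ 2 * ∫ t in a..b, (fderiv ℝ v (p + t • e) e) ^ 2 :=
        intervalIntegral_sq_le hab hderiv hdir
    _ ≤ _ := by
        gcongr
        exact intervalIntegral.integral_mono_on hab.le (hIcc ▸ hdir.pow 2).intervalIntegrable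
          (hIcc ▸ hgrad).intervalIntegrable hle

section Fiber

variable {α β E : Type*} [MeasurableSpace β] [NormedAddCommGroup E] [NormedSpace ℝ E]
  {ν : Measure β} {s : Set α} {I : α → Set β}

theorem integral_indicator_fiber (hI : ∀ x, MeasurableSet (I x)) (f : α × β → E) (x : α) :
    ∫ t, {q : α × β | q.1 ∈ s ∧ q.2 ∈ I q.1}.indicator f (x, t) ∂ν =
      s.indicator (fun x => ∫ t in I x, f (x, t) ∂ν) x := by
  by_cases hx : x ∈ s
  · simp only [indicator_of_mem hx, ← integral_indicator (hI x)]
    congr 1 with t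
    by_cases ht : t ∈ I x <;> simp [indicator, hx, ht]
  · simp [indicator, hx]

variable [MeasurableSpace α] {μ : Measure α} [SFinite ν] {f : α × β → E}

theorem integrableOn_integral_fiber (hs : MeasurableSet s) (hI : ∀ x, MeasurableSet (I x))
    (hS : MeasurableSet {q : α × β | q.1 ∈ s ∧ q.2 ∈ I q.1})
    (hf : IntegrableOn f {q : α × β | q.1 ∈ s ∧ q.2 ∈ I q.1} (μ.prod ν)) :
    IntegrableOn (fun x => ∫ t in I x, f (x, t) ∂ν) s μ := by
  have := ((integrable_indicator_iff hS).2 hf).integral_prod_left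
  simp only [integral_indicator_fiber hI] at this
  exact (integrable_indicator_iff hs).1 this

theorem setIntegral_prod_eq_integral_fiber [SFinite μ] (hs : MeasurableSet s)
    (hI : ∀ x, MeasurableSet (I x)) (hS : MeasurableSet {q : α × β | q.1 ∈ s ∧ q.2 ∈ I q.1})
    (hf : IntegrableOn f {q : α × β | q.1 ∈ s ∧ q.2 ∈ I q.1} (μ.prod ν)) :
    ∫ q in {q : α × β | q.1 ∈ s ∧ q.2 ∈ I q.1}, f q ∂(μ.prod ν) =
      ∫ x in s, ∫ t in I x, f (x, t) ∂ν ∂μ := by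
  rw [← integral_indicator hS, integral_prod _ ((integrable_indicator_iff hS).2 hf),
    ← integral_indicator hs]
  simp only [integral_indicator_fiber hI]

end Fiber

section Hausdorff

variable {X Y : Type*} [EMetricSpace X] [MeasurableSpace X] [BorelSpace X]
  [EMetricSpace Y] [MeasurableSpace Y] [BorelSpace Y]

theorem AntilipschitzWith.map_hausdorffMeasure_le {f : X → Y} (hf : AntilipschitzWith 1 f)
    (hfm : Measurable f) {δ : ℝ} (hδ : 0 ≤ δ) : (μH[δ] : Measure X).map f ≤ μH[δ] := by
  refine Measure.le_iff.2 fun T hT => ?_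
  simpa [Measure.map_apply hfm hT] using hf.hausdorffMeasure_preimage_le hδ T

theorem setIntegral_comp_le_setIntegral_hausdorffMeasure {μ : Measure X} {δ : ℝ} (hδ : 0 ≤ δ)
    (hμ : μ ≤ μH[δ]) {g : X → Y} (hg : AntilipschitzWith 1 g) (hgm : MeasurableEmbedding g)
    (s : Set X) {φ : Y → ℝ} (hφ : 0 ≤ φ) (hint : IntegrableOn φ (g '' s) μH[δ]) :
    ∫ x in s, φ (g x) ∂μ ≤ ∫ y in g '' s, φ y ∂μH[δ] := by
  have hmap : (μH[δ].restrict s).map g ≤ μH[δ].restrict (g '' s) := by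
    have h := hgm.restrict_map μH[δ] (g '' s)
    rw [hgm.injective.preimage_image] at h
    exact h ▸ Measure.restrict_mono subset_rfl (hg.map_hausdorffMeasure_le hgm.measurable hδ)
  have hint' : IntegrableOn (fun x => φ (g x)) s μH[δ] :=
    (hgm.integrable_map_iff).1 (Integrable.mono_measure hint hmap)
  calc ∫ x in s, φ (g x) ∂μ ≤ ∫ x in s, φ (g x) ∂μH[δ] :=
        integral_mono_measure (Measure.restrict_mono subset_rfl hμ)
          (ae_of_all _ fun x => hφ _) hint'
    _ = ∫ y, φ y ∂(μH[δ].restrict s).map g := (hgm.integral_map _).symm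
    _ ≤ ∫ y in g '' s, φ y ∂μH[δ] :=
        integral_mono_measure hmap (ae_of_all _ hφ) hint

end Hausdorff

theorem EuclideanSpace.volume_le_hausdorffMeasure (ι : Type*) [Fintype ι] :
    (volume : Measure (EuclideanSpace ℝ ι)) ≤ μH[Fintype.card ι] := by
  rw [← (PiLp.volume_preserving_toLp ι).map_eq, ← hausdorffMeasure_pi_real]
  exact (PiLp.antilipschitzWith_toLp 2 _).map_hausdorffMeasure_le (WithLp.measurable_toLp ..)
    (Nat.cast_nonneg _)

section Pt

variable {d : ℕ}

theorem lipschitzWith_fstPt (d : ℕ) : LipschitzWith 1 (fstPt d) := by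
  have := LipschitzWith.prod_fst.comp (WithLp.prod_lipschitzWith_ofLp 2 (Euc (d - 1)) ℝ)
  rwa [mul_one] at this

theorem continuous_fstPt (d : ℕ) : Continuous (fstPt d) := (lipschitzWith_fstPt d).continuous

theorem continuous_sndPt (d : ℕ) : Continuous (sndPt d) := WithLp.continuous_snd ..

theorem toPt_eq_add_smul (x : Euc (d - 1)) (t : ℝ) :
    toPt d x t = toPt d x 0 + t • toPt d 0 1 := by
  simp [toPt, ← WithLp.toLp_smul, ← WithLp.toLp_add]

theorem norm_toPt_zero_one : ‖toPt d 0 1‖ = 1 := by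
  simp [toPt]

theorem continuous_toPt_graph {F : Euc (d - 1) → ℝ} (hF : Continuous F) (c : ℝ) :
    Continuous fun x => toPt d x (F x + c) :=
  (WithLp.prod_continuous_toLp 2 _ _).comp (continuous_id.prodMk (hF.add continuous_const))

theorem lipschitzWith_toPt_graph {K : ℝ≥0} {F : Euc (d - 1) → ℝ} (hF : LipschitzWith K F)
    (c : ℝ) : LipschitzWith (2 ^ (1 / 2 : ℝ) * max 1 K) fun x => toPt d x (F x + c) := by
  have hFc : LipschitzWith K fun x => F x + c := by
    simpa using hF.add (LipschitzWith.const c)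
  have := (WithLp.prod_lipschitzWith_toLp 2 (Euc (d - 1)) ℝ).comp (LipschitzWith.id.prodMk hFc)
  norm_num at this
  exact this

theorem antilipschitzWith_toPt_graph (F : Euc (d - 1) → ℝ) (c : ℝ) :
    AntilipschitzWith 1 fun x => toPt d x (F x + c) :=
  (lipschitzWith_fstPt d).to_rightInverse fun _ => rfl

theorem measurableEmbedding_toPt_graph {K : ℝ≥0} {F : Euc (d - 1) → ℝ}
    (hF : LipschitzWith K F) (c : ℝ) : MeasurableEmbedding fun x => toPt d x (F x + c) :=
  (AntilipschitzWith.isClosedEmbedding (antilipschitzWith_toPt_graph F c)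
    (lipschitzWith_toPt_graph hF c).uniformContinuous).measurableEmbedding

theorem measurableEmbedding_toLp_prod :
    MeasurableEmbedding (WithLp.prodContinuousLinearEquiv 2 ℝ (Euc (d - 1)) ℝ).symm :=
  (WithLp.prodContinuousLinearEquiv 2 ℝ (Euc (d - 1)) ℝ).symm.toHomeomorph.measurableEmbedding

theorem lebPt_eq_map : lebPt d =
    (volume.prod volume).map (WithLp.prodContinuousLinearEquiv 2 ℝ (Euc (d - 1)) ℝ).symm :=
  rfl

instance isAddHaarMeasure_lebPt : (lebPt d).IsAddHaarMeasure := by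
  rw [lebPt_eq_map]; infer_instance

end Pt

section CurvedCylinder

variable {d : ℕ} {F : Euc (d - 1) → ℝ} {x₀ : Euc (d - 1)} {ρ h : ℝ}

theorem isOpen_curvedCyl (hF : Continuous F) : IsOpen (curvedCyl d F x₀ ρ h) :=
  (isOpen_ball.preimage (continuous_fstPt d)).inter <| isOpen_lt
    ((continuous_sndPt d).sub (hF.comp (continuous_fstPt d))).abs continuous_const

theorem curvedCyl_congr {f g : Euc (d - 1) → ℝ} (hfg : EqOn f g (ball x₀ ρ)) :
    curvedCyl d f x₀ ρ h = curvedCyl d g x₀ ρ h := by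
  ext p
  exact and_congr_right fun hp => by rw [hfg hp]

theorem upperGraph_congr {f g : Euc (d - 1) → ℝ} (hfg : EqOn f g (ball x₀ ρ)) :
    upperGraph d f x₀ ρ h = upperGraph d g x₀ ρ h :=
  image_congr fun x hx => by rw [hfg hx]

theorem isCompact_closure_curvedCyl (hF : Continuous F) :
    IsCompact (closure (curvedCyl d F x₀ ρ h)) := by
  refine ((isCompact_closedBall x₀ ρ).prod (isCompact_Icc (a := -h) (b := h))).image
    (f := fun q => toPt d q.1 (F q.1 + q.2)) ((WithLp.prod_continuous_toLp 2 _ _).comp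
      (continuous_fst.prodMk ((hF.comp continuous_fst).add continuous_snd)))
    |>.closure_of_subset fun p hp => ?_
  refine ⟨(fstPt d p, sndPt d p - F (fstPt d p)), ⟨ball_subset_closedBall hp.1, ?_⟩, ?_⟩
  · exact abs_le.1 hp.2.le
  · simp only [add_sub_cancel]; rfl

theorem toPt_mem_closure_curvedCyl (hh : 0 < h) {x : Euc (d - 1)} (hx : x ∈ ball x₀ ρ) {t : ℝ}
    (ht : t ∈ Icc (F x - h) (F x + h)) : toPt d x t ∈ closure (curvedCyl d F x₀ ρ h) := by
  have hsub : Ioo (F x - h) (F x + h) ⊆ toPt d x ⁻¹' curvedCyl d F x₀ ρ h :=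
    fun s hs => ⟨hx, show |s - F x| < h from
      abs_sub_lt_iff.2 ⟨by linarith [hs.2], by linarith [hs.1]⟩⟩
  have hline : Continuous (toPt d x) :=
    (WithLp.prod_continuous_toLp 2 _ _).comp (Continuous.prodMk_right x)
  rw [← closure_Ioo (by linarith : F x - h ≠ F x + h)] at ht
  exact hline.closure_preimage_subset _ (closure_mono hsub ht)

theorem toPt_graph_mem_closure_curvedCyl (hh : 0 < h) (hF : Continuous F) {x : Euc (d - 1)}
    (hx : x ∈ closure (ball x₀ ρ)) : toPt d x (F x + h) ∈ closure (curvedCyl d F x₀ ρ h) := by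
  have := map_mem_closure (t := closure (curvedCyl d F x₀ ρ h)) (continuous_toPt_graph hF h) hx
    fun y hy => toPt_mem_closure_curvedCyl hh hy ⟨by linarith, le_rfl⟩
  rwa [closure_closure] at this

theorem upperGraph_subset_closure_curvedCyl (hh : 0 < h) (hF : Continuous F) :
    upperGraph d F x₀ ρ h ⊆ closure (curvedCyl d F x₀ ρ h) := by
  rintro _ ⟨x, hx, rfl⟩
  exact toPt_graph_mem_closure_curvedCyl hh hF (subset_closure hx)

theorem preimage_toLp_curvedCyl :
    (WithLp.prodContinuousLinearEquiv 2 ℝ (Euc (d - 1)) ℝ).symm ⁻¹' curvedCyl d F x₀ ρ h =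
      {q | q.1 ∈ ball x₀ ρ ∧ q.2 ∈ Ioo (F q.1 - h) (F q.1 + h)} := by
  ext ⟨x, t⟩
  change x ∈ ball x₀ ρ ∧ |t - F x| < h ↔ x ∈ ball x₀ ρ ∧ t ∈ Ioo (F x - h) (F x + h)
  rw [abs_sub_lt_iff, mem_Ioo]
  constructor <;> rintro ⟨hx, h₁, h₂⟩ <;> exact ⟨hx, by linarith, by linarith⟩

theorem integrableOn_integral_curvedCyl (hF : Continuous F) {G : Pt d → ℝ}
    (hG : IntegrableOn G (curvedCyl d F x₀ ρ h) (lebPt d)) :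
    IntegrableOn (fun x => ∫ t in Ioo (F x - h) (F x + h), G (toPt d x t)) (ball x₀ ρ) := by
  have hS := measurableEmbedding_toLp_prod.measurable
    (isOpen_curvedCyl (x₀ := x₀) (ρ := ρ) (h := h) hF).measurableSet
  rw [lebPt_eq_map, measurableEmbedding_toLp_prod.integrableOn_map_iff] at hG
  rw [preimage_toLp_curvedCyl] at hG hS
  exact integrableOn_integral_fiber (I := fun x => Ioo (F x - h) (F x + h)) measurableSet_ball
    (fun _ => measurableSet_Ioo) hS hG

theorem setIntegral_curvedCyl (hF : Continuous F) {G : Pt d → ℝ}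
    (hG : IntegrableOn G (curvedCyl d F x₀ ρ h) (lebPt d)) :
    ∫ p in curvedCyl d F x₀ ρ h, G p ∂lebPt d =
      ∫ x in ball x₀ ρ, ∫ t in Ioo (F x - h) (F x + h), G (toPt d x t) := by
  have hS := measurableEmbedding_toLp_prod.measurable
    (isOpen_curvedCyl (x₀ := x₀) (ρ := ρ) (h := h) hF).measurableSet
  rw [lebPt_eq_map, measurableEmbedding_toLp_prod.integrableOn_map_iff] at hG
  rw [lebPt_eq_map, measurableEmbedding_toLp_prod.setIntegral_map]
  rw [preimage_toLp_curvedCyl] at hG hS ⊢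
  exact setIntegral_prod_eq_integral_fiber (I := fun x => Ioo (F x - h) (F x + h))
    measurableSet_ball (fun _ => measurableSet_Ioo) hS hG

theorem setIntegral_sq_fiber_le (hh : 0 < h) {v : Pt d → ℝ} {U : Set (Pt d)} (hU : IsOpen U)
    (hCU : closure (curvedCyl d F x₀ ρ h) ⊆ U) (hv : ContDiffOn ℝ 1 v U) {x : Euc (d - 1)}
    (hx : x ∈ ball x₀ ρ) :
    ∫ t in Ioo (F x - h) (F x + h), v (toPt d x t) ^ 2 ≤ 4 * h * v (toPt d x (F x + h)) ^ 2 +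
      16 * h ^ 2 * ∫ t in Ioo (F x - h) (F x + h), ‖gradient v (toPt d x t)‖ ^ 2 := by
  have := setIntegral_sq_along_line_le hU hv norm_toPt_zero_one.le (by linarith : F x - h < F x + h)
    fun t ht => toPt_eq_add_smul x t ▸ hCU (toPt_mem_closure_curvedCyl hh hx ht)
  simp only [← toPt_eq_add_smul] at this
  convert this using 2 <;> ring

theorem setIntegral_sq_curvedCyl_le (hh : 0 < h) (hF : Continuous F) {v : Pt d → ℝ}
    {U : Set (Pt d)} (hU : IsOpen U) (hCU : closure (curvedCyl d F x₀ ρ h) ⊆ U)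
    (hv : ContDiffOn ℝ 1 v U) :
    ∫ p in curvedCyl d F x₀ ρ h, v p ^ 2 ∂lebPt d ≤
      4 * h * (∫ x in ball x₀ ρ, v (toPt d x (F x + h)) ^ 2) +
        16 * h ^ 2 * ∫ p in curvedCyl d F x₀ ρ h, ‖gradient v p‖ ^ 2 ∂lebPt d := by
  have hK := isCompact_closure_curvedCyl hF (x₀ := x₀) (ρ := ρ) (h := h)
  have hC : MeasurableSet (curvedCyl d F x₀ ρ h) := (isOpen_curvedCyl hF).measurableSet
  have hCfin : lebPt d (curvedCyl d F x₀ ρ h) ≠ ⊤ :=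
    ((measure_mono subset_closure).trans_lt hK.measure_lt_top).ne
  have hv2 : IntegrableOn (fun p => v p ^ 2) (curvedCyl d F x₀ ρ h) (lebPt d) :=
    ((hv.continuousOn.mono hCU).pow 2).integrableOn_of_isCompact_of_subset hK subset_closure hC
      hCfin
  have hgrad : ContinuousOn (fun p => ‖gradient v p‖ ^ 2) U := by
    simp only [norm_gradient_eq_norm_fderiv]
    exact ((hv.continuousOn_fderiv_of_isOpen hU le_rfl).norm).pow 2
  have hgrad2 : IntegrableOn (fun p => ‖gradient v p‖ ^ 2) (curvedCyl d F x₀ ρ h) (lebPt d) :=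
    (hgrad.mono hCU).integrableOn_of_isCompact_of_subset hK subset_closure hC hCfin
  have hgraph : IntegrableOn (fun x => v (toPt d x (F x + h)) ^ 2) (ball x₀ ρ) :=
    (((hv.continuousOn.mono hCU).pow 2).comp (continuous_toPt_graph hF h).continuousOn
      fun _ hx => toPt_graph_mem_closure_curvedCyl hh hF hx).integrableOn_of_isCompact_of_subset
      isBounded_ball.isCompact_closure subset_closure measurableSet_ball measure_ball_lt_top.ne
  have hgradF := (integrableOn_integral_curvedCyl hF hgrad2).const_mul (16 * h ^ 2)
  calc ∫ p in curvedCyl d F x₀ ρ h, v p ^ 2 ∂lebPt d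
      = ∫ x in ball x₀ ρ, ∫ t in Ioo (F x - h) (F x + h), v (toPt d x t) ^ 2 :=
        setIntegral_curvedCyl hF hv2
    _ ≤ ∫ x in ball x₀ ρ, (4 * h * v (toPt d x (F x + h)) ^ 2 +
          16 * h ^ 2 * ∫ t in Ioo (F x - h) (F x + h), ‖gradient v (toPt d x t)‖ ^ 2) :=
        setIntegral_mono_on (integrableOn_integral_curvedCyl hF hv2)
          ((hgraph.const_mul (4 * h)).fun_add hgradF) measurableSet_ball
          fun x hx => setIntegral_sq_fiber_le hh hU hCU hv hx
    _ = _ := by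
        rw [integral_add (hgraph.const_mul _) hgradF, integral_const_mul, integral_const_mul,
          setIntegral_curvedCyl hF hgrad2]

end CurvedCylinder

section UpperGraph

variable {d : ℕ} {K : ℝ≥0} {F : Euc (d - 1) → ℝ} {x₀ : Euc (d - 1)} {ρ h : ℝ}

theorem hausdorffMeasure_upperGraph_lt_top (hF : LipschitzWith K F) :
    μH[((d - 1 : ℕ) : ℝ)] (upperGraph d F x₀ ρ h) < ⊤ :=
  calc μH[((d - 1 : ℕ) : ℝ)] (upperGraph d F x₀ ρ h)
      ≤ _ := (lipschitzWith_toPt_graph hF h).hausdorffMeasure_image_le (Nat.cast_nonneg _) _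
    _ < ⊤ := ENNReal.mul_lt_top (ENNReal.rpow_lt_top_of_nonneg (Nat.cast_nonneg _)
        ENNReal.coe_ne_top) isBounded_ball.measure_lt_top

theorem integrableOn_upperGraph (hh : 0 < h) (hF : LipschitzWith K F) {φ : Pt d → ℝ}
    (hφ : ContinuousOn φ (closure (curvedCyl d F x₀ ρ h))) :
    IntegrableOn φ (upperGraph d F x₀ ρ h) μH[((d - 1 : ℕ) : ℝ)] :=
  hφ.integrableOn_of_isCompact_of_subset (isCompact_closure_curvedCyl hF.continuous)
    (upperGraph_subset_closure_curvedCyl hh hF.continuous)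
    ((measurableEmbedding_toPt_graph hF h).measurableSet_image' measurableSet_ball)
    (hausdorffMeasure_upperGraph_lt_top hF).ne

theorem setIntegral_graph_le_upperGraph (hF : LipschitzWith K F) {φ : Pt d → ℝ} (hφ : 0 ≤ φ)
    (hint : IntegrableOn φ (upperGraph d F x₀ ρ h) μH[((d - 1 : ℕ) : ℝ)]) :
    ∫ x in ball x₀ ρ, φ (toPt d x (F x + h)) ≤
      ∫ p in upperGraph d F x₀ ρ h, φ p ∂μH[((d - 1 : ℕ) : ℝ)] :=
  setIntegral_comp_le_setIntegral_hausdorffMeasure (Nat.cast_nonneg _)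
    (by simpa using EuclideanSpace.volume_le_hausdorffMeasure (Fin (d - 1)))
    (antilipschitzWith_toPt_graph F h) (measurableEmbedding_toPt_graph hF h) _ hφ hint

end UpperGraph

theorem poincare_curved_cylinder_general
    (d : ℕ) (hd : 2 ≤ d) (x₀ : Euc (d - 1)) (ρ : ℝ)
    (Λ : ℝ) (f : Euc (d - 1) → ℝ)
    (hf : LipschitzOnWith Λ.toNNReal f (Metric.ball x₀ ρ)) :
    ∃ C > 0, ∀ h : ℝ, 0 < h → ∀ v : Pt d → ℝ,
      (∃ U : Set (Pt d), IsOpen U ∧ closure (curvedCyl d f x₀ ρ h) ⊆ U ∧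
        ContDiffOn ℝ 1 v U) →
      C * ∫ p in curvedCyl d f x₀ ρ h, (v p) ^ 2 ∂(lebPt d) ≤
        h ^ 2 * ∫ p in curvedCyl d f x₀ ρ h, ‖gradient v p‖ ^ 2 ∂(lebPt d)
          + h * ∫ p in upperGraph d f x₀ ρ h, (v p) ^ 2 ∂(μH[(d : ℝ) - 1]) := by
  obtain ⟨F, hF, hfF⟩ := hf.extend_real
  refine ⟨1 / 16, by norm_num, fun h hh v ⟨U, hU, hCU, hv⟩ => ?_⟩
  rw [curvedCyl_congr hfF] at hCU ⊢
  have hdim : (d : ℝ) - 1 = ((d - 1 : ℕ) : ℝ) := by rw [Nat.cast_sub (by omega), Nat.cast_one]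
  rw [upperGraph_congr hfF, hdim]
  have hbulk := setIntegral_sq_curvedCyl_le hh hF.continuous hU hCU hv
  have htrace := setIntegral_graph_le_upperGraph hF (fun p => sq_nonneg (v p))
    (integrableOn_upperGraph hh hF ((hv.continuousOn.mono hCU).pow 2))
  have hΓ : 0 ≤ ∫ p in upperGraph d F x₀ ρ h, v p ^ 2 ∂μH[((d - 1 : ℕ) : ℝ)] :=
    integral_nonneg fun p => sq_nonneg (v p)
  nlinarith [mul_le_mul_of_nonneg_left htrace hh.le, mul_nonneg hh.le hΓ]

/-- Poincaré-type inequality on curved Lipschitz cylinders: for an open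
ball `B ⊆ ℝ^{d-1}` and a `Λ`-Lipschitz `f : B → ℝ` there is `C > 0`, depending only on
`B`, `Λ` and `d`, such that for every `h > 0` and every `v` of class `C¹` on a
neighborhood of the closure of `C_h`,
`C ∫_{C_h} v² ≤ h² ∫_{C_h} |∇v|² + h ∫_{Γ_h} v² d𝓗^{d-1}`. -/
theorem poincare_curved_cylinder
    (d : ℕ) (hd : 2 ≤ d) (x₀ : Euc (d - 1)) (ρ : ℝ) (hρ : 0 < ρ)
    (Λ : ℝ) (hΛ : 0 ≤ Λ) (f : Euc (d - 1) → ℝ)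
    (hf : LipschitzOnWith Λ.toNNReal f (Metric.ball x₀ ρ)) :
    ∃ C > 0, ∀ h : ℝ, 0 < h → ∀ v : Pt d → ℝ,
      (∃ U : Set (Pt d), IsOpen U ∧ closure (curvedCyl d f x₀ ρ h) ⊆ U ∧
        ContDiffOn ℝ 1 v U) →
      C * ∫ p in curvedCyl d f x₀ ρ h, (v p) ^ 2 ∂(lebPt d) ≤
        h ^ 2 * ∫ p in curvedCyl d f x₀ ρ h, ‖gradient v p‖ ^ 2 ∂(lebPt d)
          + h * ∫ p in upperGraph d f x₀ ρ h, (v p) ^ 2 ∂(μH[(d : ℝ) - 1]) :=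
  poincare_curved_cylinder_general d hd x₀ ρ Λ f hf
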